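/- arXiv:0705.2784 — 4 statements merged into one kernel-verified Lean document; each statement's English description precedes it below -/
import Mathlib

section
/- Let X and Y be finite nonempty sets and let f, f' : X → Y. Suppose α, β, δ are nonnegative reals such that the number of pairs (y,y') ∈ Y × Y with |L_f(y) ∩ L_{f'}(y')| ≥ α is at most β·|Y|², and |L_f(y)| ≤ δ for every y ∈ Y. Then F(ρ_f, ρ_{f'})² ≤ (α² + β·δ²)·|Y|³/|X|². -/
open Matrix BigOperators
open scoped ComplexOrder

/-- The positive semidefinite square root of a matrix (zero if the matrix is
not positive semidefinite). -/
noncomputable def msqrt {n : Type*} [Fintype n] [DecidableEq n]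
    (A : Matrix n n ℂ) : Matrix n n ℂ :=
  letI := Classical.dec A.PosSemidef
  if h : A.PosSemidef then
    (h.1.eigenvectorUnitary : Matrix n n ℂ) *
      diagonal ((↑) ∘ (fun i => Real.sqrt (h.1.eigenvalues i))) *
      (star h.1.eigenvectorUnitary : Matrix n n ℂ)
  else 0

/-- The fidelity `F(ρ,σ) = tr √(√ρ σ √ρ)` of two (positive semidefinite) matrices. -/
noncomputable def fidelity {n : Type*} [Fintype n] [DecidableEq n]
    (ρ σ : Matrix n n ℂ) : ℝ :=
  ((msqrt (msqrt ρ * σ * msqrt ρ)).trace).re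

/-- The hiding state `ρ_f` of a function `f : X → Y`:
`(ρ_f)_{x,x'} = 1/|X|` if `f x = f x'` and `0` otherwise. -/
noncomputable def hidingState {X Y : Type*} [Fintype X] [DecidableEq Y]
    (f : X → Y) : Matrix X X ℂ :=
  Matrix.of fun x x' => if f x = f x' then (1 : ℂ) / (Fintype.card X) else 0

/-!
If `λᵢ` are the eigenvalues of `√ρ σ √ρ`, then `F(ρ, σ) = ∑ √λᵢ`, and Cauchy–Schwarz over the
nonzero eigenvalues gives `F² ≤ rank (√ρ σ √ρ) · ∑ λᵢ ≤ rank σ · tr(ρσ)`. For hiding states, `ρ_f = |X|⁻¹ · B Bᴴ` with `B` the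
`X × Y` incidence matrix of the graph of `f`, so `rank ρ_{f'} ≤ |Y|`, while
`tr(ρ_f ρ_{f'}) = |X|⁻² ∑_{y,y'} |L_f(y) ∩ L_{f'}(y')|²`. In that sum the pairs below the
threshold `α` contribute at most `α²|Y|²`, and the at most `β|Y|²` others at most `δ²` each.
-/

open Finset

section Sqrt

variable {n : Type*} [Fintype n] [DecidableEq n] {A : Matrix n n ℂ}

lemma msqrt_eq_cfc (hA : A.PosSemidef) : msqrt A = cfc Real.sqrt A := by
  rw [msqrt, dif_pos hA, hA.1.cfc_eq, IsHermitian.cfc, Unitary.conjStarAlgAut_apply]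
  rfl

lemma isHermitian_msqrt (hA : A.PosSemidef) : (msqrt A).IsHermitian := by
  rw [msqrt_eq_cfc hA]
  exact cfc_predicate Real.sqrt A

lemma msqrt_mul_self (hA : A.PosSemidef) : msqrt A * msqrt A = A := by
  rw [msqrt_eq_cfc hA, ← cfc_mul Real.sqrt Real.sqrt A]
  conv_rhs => rw [← cfc_id' ℝ A hA.1.isSelfAdjoint]
  refine cfc_congr fun x hx => Real.mul_self_sqrt ?_
  obtain ⟨i, rfl⟩ := hA.1.spectrum_real_eq_range_eigenvalues ▸ hx
  exact hA.eigenvalues_nonneg i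

lemma trace_msqrt (hA : A.PosSemidef) :
    (msqrt A).trace = ∑ i, (Real.sqrt (hA.1.eigenvalues i) : ℂ) := by
  rw [msqrt, dif_pos hA, trace_mul_cycle, Unitary.coe_star_mul_self, one_mul, trace_diagonal]
  rfl

end Sqrt

lemma sq_sum_le_card_ne_zero_mul_sum_sq {ι : Type*} [Fintype ι] (a : ι → ℝ) :
    (∑ i, a i) ^ 2 ≤ #{i | a i ≠ 0} * ∑ i, a i ^ 2 := by
  have hsq : ∑ i with a i ≠ 0, a i ^ 2 = ∑ i, a i ^ 2 :=
    sum_filter_of_ne fun i _ h => left_ne_zero_of_mul (by rwa [← sq])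
  rw [← sum_filter_ne_zero, ← hsq]
  exact sq_sum_le_card_mul_sum_sq

lemma sq_re_trace_msqrt_le {n : Type*} [Fintype n] [DecidableEq n] {M : Matrix n n ℂ}
    (hM : M.PosSemidef) : (msqrt M).trace.re ^ 2 ≤ M.rank * M.trace.re := by
  set ev := hM.1.eigenvalues
  have hev : ∀ i, 0 ≤ ev i := hM.eigenvalues_nonneg
  have hrank : M.rank = #{i | Real.sqrt (ev i) ≠ 0} := by
    simp_rw [hM.1.rank_eq_card_non_zero_eigs, Fintype.card_subtype, ne_eq, Real.sqrt_eq_zero (hev _)]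
    rfl
  have htrace : M.trace.re = ∑ i, Real.sqrt (ev i) ^ 2 := by
    simp_rw [hM.1.trace_eq_sum_eigenvalues, Real.sq_sqrt (hev _)]
    simp [ev]
  rw [trace_msqrt hM, hrank, htrace]
  simpa using sq_sum_le_card_ne_zero_mul_sum_sq fun i => Real.sqrt (ev i)

lemma fidelity_sq_le_rank_mul_re_trace {n : Type*} [Fintype n] [DecidableEq n]
    {ρ σ : Matrix n n ℂ} (hρ : ρ.PosSemidef) (hσ : σ.PosSemidef) :
    fidelity ρ σ ^ 2 ≤ σ.rank * (ρ * σ).trace.re := by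
  set S := msqrt ρ
  have hM : (S * σ * S).PosSemidef := by
    have hS : Sᴴ = S := isHermitian_msqrt hρ
    simpa only [hS] using hσ.mul_mul_conjTranspose_same S
  have hrank : (S * σ * S).rank ≤ σ.rank :=
    (rank_mul_le_left _ _).trans (rank_mul_le_right _ _)
  have htrace : (S * σ * S).trace = (ρ * σ).trace := by
    rw [trace_mul_cycle, msqrt_mul_self hρ]
  calc fidelity ρ σ ^ 2 ≤ (S * σ * S).rank * (S * σ * S).trace.re := sq_re_trace_msqrt_le hM
    _ ≤ σ.rank * (ρ * σ).trace.re := by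
      rw [htrace]
      gcongr
      exact Complex.nonneg_iff.mp (htrace ▸ hM.trace_nonneg) |>.1

lemma sum_card_fiber_sq {α β R : Type*} [Fintype α] [Fintype β] [DecidableEq β]
    [CommSemiring R] (g : α → β) :
    ∑ b, (#{a | g a = b} : R) ^ 2 = ∑ a, ∑ a', if g a = g a' then 1 else 0 := by
  calc ∑ b, (#{a | g a = b} : R) ^ 2 = ∑ b, ∑ a with g a = b, (#{a' | g a' = b} : R) := by
        simp [sq]
    _ = ∑ a, (#{a' | g a' = g a} : R) := sum_fiberwise' _ g fun b => (#{a' | g a' = b} : R)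
    _ = ∑ a, ∑ a', if g a = g a' then 1 else 0 := by
        simp [sum_boole, eq_comm]

section Hiding

variable {X Y : Type*} [Fintype X] [Fintype Y] [DecidableEq Y]

def graphMatrix (R : Type*) [Zero R] [One R] (f : X → Y) : Matrix X Y R :=
  of fun x y => if f x = y then 1 else 0

lemma hidingState_eq_smul (f : X → Y) :
    hidingState f = (Fintype.card X : ℂ)⁻¹ • (graphMatrix ℂ f * (graphMatrix ℂ f)ᴴ) := by
  ext x x'
  simp [hidingState, graphMatrix, mul_apply, eq_comm]

lemma posSemidef_hidingState (f : X → Y) : (hidingState f).PosSemidef := by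
  rw [hidingState_eq_smul]
  exact (posSemidef_self_mul_conjTranspose _).smul (by positivity)

lemma rank_hidingState_le (f : X → Y) : (hidingState f).rank ≤ Fintype.card Y := by
  rw [hidingState_eq_smul, ← Matrix.mul_smul]
  exact (rank_mul_le_left _ _).trans (rank_le_card_width _)

lemma trace_hidingState_mul (f f' : X → Y) :
    (hidingState f * hidingState f').trace =
      (∑ p : Y × Y, (#{x | f x = p.1 ∧ f' x = p.2} : ℂ) ^ 2) / Fintype.card X ^ 2 := by
  have hpair : ∀ p : Y × Y, #{x | f x = p.1 ∧ f' x = p.2} = #{x | (f x, f' x) = p} := fun p => by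
    simp only [Prod.ext_iff]
  simp_rw [hpair, sum_card_fiber_sq, trace, diag_apply, mul_apply, sum_div]
  refine sum_congr rfl fun x _ => sum_congr rfl fun x' _ => ?_
  simp only [hidingState, of_apply, Prod.ext_iff]
  split_ifs <;> grind

end Hiding

lemma sum_sq_le_of_threshold {ι : Type*} [Fintype ι] (N : ι → ℝ) (α δ : ℝ)
    (hN : ∀ i, 0 ≤ N i) (hδ : ∀ i, N i ≤ δ) :
    ∑ i, N i ^ 2 ≤ α ^ 2 * Fintype.card ι + #{i | α ≤ N i} * δ ^ 2 := by
  rw [← sum_filter_not_add_sum_filter _ (fun i => α ≤ N i)]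
  gcongr
  · calc ∑ i with ¬α ≤ N i, N i ^ 2 ≤ #{i | ¬α ≤ N i} • α ^ 2 :=
          sum_le_card_nsmul _ _ _ fun i hi =>
            pow_le_pow_left₀ (hN i) (not_le.mp (mem_filter.mp hi).2).le 2
      _ ≤ α ^ 2 * Fintype.card ι := by
          rw [nsmul_eq_mul, mul_comm]
          gcongr
          exact_mod_cast card_le_univ _
  · calc ∑ i with α ≤ N i, N i ^ 2 ≤ #{i | α ≤ N i} • δ ^ 2 :=
          sum_le_card_nsmul _ _ _ fun i _ => pow_le_pow_left₀ (hN i) (hδ i) 2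
      _ = #{i | α ≤ N i} * δ ^ 2 := nsmul_eq_mul _ _

theorem stmt_0_general {X Y : Type*} [Fintype X] [Fintype Y] [DecidableEq X] [DecidableEq Y]
    (f f' : X → Y) (α β δ : ℝ)
    (hcount : ((Finset.univ.filter (fun yy : Y × Y =>
        α ≤ ((Finset.univ.filter (fun x : X => f x = yy.1 ∧ f' x = yy.2)).card : ℝ))).card : ℝ)
      ≤ β * (Fintype.card Y : ℝ) ^ 2)
    (hlevel : ∀ y : Y, ((Finset.univ.filter (fun x : X => f x = y)).card : ℝ) ≤ δ) :
    (fidelity (hidingState f) (hidingState f')) ^ 2 ≤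
      (α ^ 2 + β * δ ^ 2) * (Fintype.card Y : ℝ) ^ 3 / (Fintype.card X : ℝ) ^ 2 := by
  let N : Y × Y → ℝ := fun p => #{x | f x = p.1 ∧ f' x = p.2}
  have hN : ∀ p, N p ≤ δ := fun p =>
    le_trans (Nat.cast_le.mpr <| card_le_card fun x => by simp +contextual) (hlevel p.1)
  have hsum : ∑ p, N p ^ 2 ≤ (α ^ 2 + β * δ ^ 2) * (Fintype.card Y : ℝ) ^ 2 := by
    have hcount' := mul_le_mul_of_nonneg_right hcount (sq_nonneg δ)
    refine (sum_sq_le_of_threshold N α δ (fun p => Nat.cast_nonneg _) hN).trans ?_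
    rw [Fintype.card_prod, Nat.cast_mul]
    linear_combination hcount'
  have htrace :
      (hidingState f * hidingState f').trace.re = (∑ p, N p ^ 2) / (Fintype.card X : ℝ) ^ 2 := by
    rw [trace_hidingState_mul, ← Complex.ofReal_re ((∑ p, N p ^ 2) / (Fintype.card X : ℝ) ^ 2)]
    push_cast [N]
    rfl
  have hrank : ((hidingState f').rank : ℝ) ≤ Fintype.card Y := by
    exact_mod_cast rank_hidingState_le f'
  calc fidelity (hidingState f) (hidingState f') ^ 2
      ≤ (hidingState f').rank * (hidingState f * hidingState f').trace.re :=
        fidelity_sq_le_rank_mul_re_trace (posSemidef_hidingState f) (posSemidef_hidingState f')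
    _ ≤ Fintype.card Y * ((α ^ 2 + β * δ ^ 2) * (Fintype.card Y : ℝ) ^ 2 /
          (Fintype.card X : ℝ) ^ 2) := by
        rw [htrace]
        exact mul_le_mul hrank (div_le_div_of_nonneg_right hsum (sq_nonneg _))
          (div_nonneg (sum_nonneg fun p _ => sq_nonneg _) (sq_nonneg _)) (Nat.cast_nonneg _)
    _ = (α ^ 2 + β * δ ^ 2) * (Fintype.card Y : ℝ) ^ 3 / (Fintype.card X : ℝ) ^ 2 := by ring

/-- If the number of pairs `(y,y')` with `|L_f(y) ∩ L_{f'}(y')| ≥ α` is at most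
`β|Y|²`, and `|L_f(y)| ≤ δ` for all `y`, then `F(ρ_f,ρ_{f'})² ≤ (α² + βδ²)|Y|³/|X|²`. -/
theorem stmt_0 {X Y : Type*} [Fintype X] [Fintype Y] [DecidableEq X] [DecidableEq Y]
    [Nonempty X] [Nonempty Y] (f f' : X → Y) (α β δ : ℝ)
    (hα : 0 ≤ α) (hβ : 0 ≤ β) (hδ : 0 ≤ δ)
    (hcount : ((Finset.univ.filter (fun yy : Y × Y =>
        α ≤ ((Finset.univ.filter (fun x : X => f x = yy.1 ∧ f' x = yy.2)).card : ℝ))).card : ℝ)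
      ≤ β * (Fintype.card Y : ℝ) ^ 2)
    (hlevel : ∀ y : Y, ((Finset.univ.filter (fun x : X => f x = y)).card : ℝ) ≤ δ) :
    (fidelity (hidingState f) (hidingState f')) ^ 2 ≤
      (α ^ 2 + β * δ ^ 2) * (Fintype.card Y : ℝ) ^ 3 / (Fintype.card X : ℝ) ^ 2 :=
  stmt_0_general f f' α β δ hcount hlevel
end

section
/- For all integers d ≥ 2, t ≥ 2, and k ≥ 2 with k dividing t, one has k·(binom(d + t/k, d) − 1) ≤ binom(d+t, d) − 2. -/
lemma aux1 (n : ℕ) (h : 3 ≤ n) : n ≤ n.choose 2 := by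
  induction n with
  | zero => omega
  | succ m ih =>
    rcases Nat.lt_or_ge m 3 with hm | hm
    · interval_cases m <;> simp_all
    · have h2 := ih (by omega)
      have h3 : (m + 1).choose 2 = m.choose 1 + m.choose 2 :=
        Nat.choose_succ_succ m 1
      rw [h3, Nat.choose_one_right]
      omega

lemma auxB (e n s : ℕ) (hn : e + 3 ≤ n) (hs : 1 ≤ s) :
    n.choose (e + 2) + (e + 2 + s).choose (e + 2) ≤ (n + s).choose (e + 2) := by
  induction s, hs using Nat.le_induction with
  | base =>
    have hp : (n + 1).choose (e + 2) = n.choose (e + 1) + n.choose (e + 2) :=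
      Nat.choose_succ_succ n (e + 1)
    have h1 : (e + 3).choose (e + 2) = e + 3 := Nat.choose_succ_self_right (e + 2)
    have h2 : (e + 3).choose (e + 1) ≤ n.choose (e + 1) := Nat.choose_le_choose _ hn
    have h3 : (e + 3).choose (e + 1) = (e + 3).choose 2 := by
      have := Nat.choose_symm (n := e + 3) (k := 2) (by omega)
      simpa using this
    have h4 := aux1 (e + 3) (by omega)
    have h5 : e + 2 + 1 = e + 3 := by omega
    rw [hp, h5, h1]
    omega
  | succ m hm ih =>
    have hp1 : (n + m + 1).choose (e + 2)
        = (n + m).choose (e + 1) + (n + m).choose (e + 2) :=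
      Nat.choose_succ_succ (n + m) (e + 1)
    have hp2 : (e + 2 + m + 1).choose (e + 2)
        = (e + 2 + m).choose (e + 1) + (e + 2 + m).choose (e + 2) :=
      Nat.choose_succ_succ (e + 2 + m) (e + 1)
    have hmono : (e + 2 + m).choose (e + 1) ≤ (n + m).choose (e + 1) :=
      Nat.choose_le_choose _ (by omega)
    have e1 : e + 2 + (m + 1) = e + 2 + m + 1 := by omega
    have e2 : n + (m + 1) = n + m + 1 := by omega
    rw [e1, e2, hp1, hp2]
    omega

lemma auxC (d s k : ℕ) (hd : 2 ≤ d) (hs : 1 ≤ s) (hk : 1 ≤ k) :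
    k * (d + s).choose d ≤ (d + k * s).choose d := by
  obtain ⟨e, rfl⟩ : ∃ e, d = e + 2 := ⟨d - 2, by omega⟩
  induction k, hk using Nat.le_induction with
  | base => simp
  | succ m hm ih =>
    have hB := auxB e (e + 2 + m * s) s (by nlinarith) hs
    have e1 : e + 2 + (m + 1) * s = e + 2 + m * s + s := by ring
    rw [e1]
    calc (m + 1) * (e + 2 + s).choose (e + 2)
        = m * (e + 2 + s).choose (e + 2) + (e + 2 + s).choose (e + 2) := by ring
      _ ≤ (e + 2 + m * s).choose (e + 2) + (e + 2 + s).choose (e + 2) := by omega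
      _ ≤ (e + 2 + m * s + s).choose (e + 2) := by omega

/-- For integers `d ≥ 2`, `t ≥ 2` and `k ≥ 2` with `k ∣ t`,
`k·(C(d+t/k,d) − 1) ≤ C(d+t,d) − 2`. -/
theorem stmt_11 (d t k : ℕ) (hd : 2 ≤ d) (ht : 2 ≤ t) (hk : 2 ≤ k) (hdvd : k ∣ t) :
    k * (Nat.choose (d + t / k) d - 1) ≤ Nat.choose (d + t) d - 2 := by
  obtain ⟨s, rfl⟩ := hdvd
  rw [Nat.mul_div_cancel_left s (by omega)]
  have hs : 1 ≤ s := by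
    rcases Nat.eq_zero_or_pos s with h | h
    · subst h; omega
    · exact h
  have hC := auxC d s k hd hs (by omega)
  have h1 : 1 ≤ (d + s).choose d := Nat.choose_pos (by omega)
  have key : k * ((d + s).choose d - 1) + k ≤ (d + k * s).choose d := by
    obtain ⟨a, ha⟩ := Nat.exists_eq_add_of_le h1
    rw [ha]; rw [ha] at hC
    have : 1 + a - 1 = a := by omega
    rw [this]
    have : k * a + k = k * (1 + a) := by ring
    omega
  set p := k * ((d + s).choose d - 1) with hp
  omega
end

section
/- Let p be an odd prime and F_q a finite field of characteristic p with q elements, with field trace Tr : F_q → ZMod p. Then for every r ∈ F_q with r ≠ 1 and r ≠ −1, Σ_{s ∈ F_q} cos(4π·(Tr s).val/p) · cos(4π·(Tr(r·s)).val/p) = 0. -/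
open scoped BigOperators

open Real in
private lemma cos4_congr (p : ℕ) [Fact p.Prime] (m : ℤ) (a : ZMod p)
    (h : (m : ZMod p) = a) :
    Real.cos (4 * π * (m : ℝ) / p) = Real.cos (4 * π * (a.val : ℝ) / p) := by
  have hp0 : (p : ℝ) ≠ 0 := Nat.cast_ne_zero.2 (Fact.out : p.Prime).pos.ne'
  have hdvd : (p : ℤ) ∣ (m - a.val) := by
    rw [← ZMod.intCast_zmod_eq_zero_iff_dvd]
    push_cast
    simp [h, ZMod.natCast_val, ZMod.cast_id]
  obtain ⟨k, hk⟩ := hdvd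
  have hm : (m : ℝ) = (a.val : ℝ) + p * k := by
    have : m = a.val + p * k := by linarith [hk]
    exact_mod_cast congrArg (Int.cast : ℤ → ℝ) this
  have : 4 * π * (m : ℝ) / p = 4 * π * (a.val : ℝ) / p + (2 * k : ℤ) * (2 * π) := by
    rw [hm]; push_cast; field_simp; ring
  rw [this, Real.cos_add_int_mul_two_pi]

open Real in
private lemma cos4_re (p : ℕ) [Fact p.Prime] (b : ZMod p) :
    (ZMod.stdAddChar (2 * b)).re = Real.cos (4 * π * (b.val : ℝ) / p) := by
  have h2 : (2 * b) = (((2 * b.val : ℤ) : ZMod p)) := by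
    push_cast
    simp [ZMod.natCast_val, ZMod.cast_id]
  rw [h2, ZMod.stdAddChar_coe]
  have : (2 * (π : ℂ) * Complex.I * ((2 * b.val : ℤ) : ℂ) / (p : ℂ))
      = ((4 * π * (b.val : ℝ) / p : ℝ) : ℂ) * Complex.I := by
    push_cast; ring
  rw [this, Complex.exp_ofReal_mul_I_re]

open Real in
private lemma aux_sum (p : ℕ) [Fact p.Prime] (hp : p ≠ 2) (F : Type*) [Field F] [Fintype F]
    [CharP F p] [Algebra (ZMod p) F] (c : F) (hc : c ≠ 0) :
    ∑ s : F, Real.cos (4 * π * ((Algebra.trace (ZMod p) F (c * s)).val : ℝ) / p) = 0 := by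
  have hchar : ringChar F = p := ringChar.eq F p
  subst hchar
  set Tr := Algebra.trace (ZMod (ringChar F)) F with hTr
  -- the additive character s ↦ e(2 Tr(c s))
  have hhom : ∀ x y : F, 2 * Tr (c * (x + y)) = 2 * Tr (c * x) + 2 * Tr (c * y) := by
    intro x y
    rw [mul_add, map_add]; ring
  let φ : F →+ ZMod (ringChar F) := AddMonoidHom.mk' (fun s => 2 * Tr (c * s)) hhom
  let ψ : AddChar F ℂ := ZMod.stdAddChar.compAddMonoidHom φ
  have hψre : ∀ s : F, (ψ s).re
      = Real.cos (4 * π * ((Tr (c * s)).val : ℝ) / (ringChar F)) := by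
    intro s
    have : ψ s = ZMod.stdAddChar (2 * Tr (c * s)) := rfl
    rw [this, cos4_re]
  -- nontriviality
  obtain ⟨s₀, hs₀⟩ := FiniteField.trace_to_zmod_nondegenerate F hc
  have h2ne : (2 : ZMod (ringChar F)) ≠ 0 := by
    intro h
    have hd : ringChar F ∣ 2 := by
      rwa [show ((2 : ZMod (ringChar F))) = ((2 : ℕ) : ZMod (ringChar F)) from by push_cast; ring,
        ZMod.natCast_eq_zero_iff] at h
    exact hp ((Nat.prime_dvd_prime_iff_eq (Fact.out : (ringChar F).Prime) Nat.prime_two).mp hd)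
  have hψne : ψ ≠ 0 := by
    intro h
    have h1 : ψ s₀ = 1 := by rw [h]; simp
    have : ZMod.stdAddChar (2 * Tr (c * s₀)) = ZMod.stdAddChar (0 : ZMod (ringChar F)) := by
      rw [AddChar.map_zero_eq_one]; exact h1
    have := ZMod.injective_stdAddChar this
    exact (mul_ne_zero h2ne hs₀) this
  have hsum : ∑ s : F, ψ s = 0 := AddChar.sum_eq_zero_iff_ne_zero.2 hψne
  calc ∑ s : F, Real.cos (4 * π * ((Tr (c * s)).val : ℝ) / (ringChar F))
      = ∑ s : F, (ψ s).re := by exact Finset.sum_congr rfl fun s _ => (hψre s).symm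
    _ = (∑ s : F, ψ s).re := (Complex.re_sum _ _).symm
    _ = 0 := by rw [hsum]; rfl

open Real in
private lemma cos_mul_cos_val (p : ℕ) [Fact p.Prime] (a b : ZMod p) :
    Real.cos (4 * π * (a.val : ℝ) / p) * Real.cos (4 * π * (b.val : ℝ) / p)
      = (Real.cos (4 * π * (((a + b).val : ℕ) : ℝ) / p)
         + Real.cos (4 * π * (((a - b).val : ℕ) : ℝ) / p)) / 2 := by
  have hcc : ∀ X Y : ℝ, Real.cos X * Real.cos Y
      = (Real.cos (X + Y) + Real.cos (X - Y)) / 2 := by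
    intro X Y; rw [Real.cos_add, Real.cos_sub]; ring
  rw [hcc]
  have h1 : 4 * π * (a.val : ℝ) / p + 4 * π * (b.val : ℝ) / p
      = 4 * π * (((a.val : ℤ) + b.val : ℤ) : ℝ) / p := by push_cast; ring
  have h2 : 4 * π * (a.val : ℝ) / p - 4 * π * (b.val : ℝ) / p
      = 4 * π * (((a.val : ℤ) - b.val : ℤ) : ℝ) / p := by push_cast; ring
  rw [h1, h2, cos4_congr p _ (a + b) (by push_cast; simp [ZMod.natCast_val, ZMod.cast_id]),
      cos4_congr p _ (a - b) (by push_cast; simp [ZMod.natCast_val, ZMod.cast_id])]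

/-- For `p` an odd prime, `F_q` of characteristic `p`, and `r ∈ F_q` with
`r ≠ ±1`, `Σ_s cos(4π Tr(s)/p) cos(4π Tr(rs)/p) = 0`. -/
theorem stmt_14 (p : ℕ) [Fact p.Prime] (hp : p ≠ 2) (F : Type*) [Field F] [Fintype F]
    [CharP F p] [Algebra (ZMod p) F] (r : F) (hr1 : r ≠ 1) (hr2 : r ≠ -1) :
    ∑ s : F, Real.cos (4 * Real.pi * ((Algebra.trace (ZMod p) F s).val : ℝ) / p)
        * Real.cos (4 * Real.pi * ((Algebra.trace (ZMod p) F (r * s)).val : ℝ) / p)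
      = 0 := by
  set Tr := Algebra.trace (ZMod p) F with hTr
  have hpt : ∀ s : F,
      Real.cos (4 * Real.pi * ((Tr s).val : ℝ) / p)
        * Real.cos (4 * Real.pi * ((Tr (r * s)).val : ℝ) / p)
      = (Real.cos (4 * Real.pi * ((Tr ((1 + r) * s)).val : ℝ) / p)
         + Real.cos (4 * Real.pi * ((Tr ((1 - r) * s)).val : ℝ) / p)) / 2 := by
    intro s
    rw [cos_mul_cos_val]
    congr 3
    · rw [← map_add]; congr 1; ring
    · rw [← map_sub]; congr 1; ring
  rw [Finset.sum_congr rfl fun s _ => hpt s]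
  have ha : (1 + r : F) ≠ 0 := by intro h; apply hr2; linear_combination h
  have hb : (1 - r : F) ≠ 0 := by intro h; apply hr1; linear_combination -h
  rw [← Finset.sum_div, Finset.sum_add_distrib,
      aux_sum p hp F (1 + r) ha, aux_sum p hp F (1 - r) hb]
  norm_num
end

section
/- Let p be an odd prime and F_q a finite field of characteristic p with q elements, with field trace Tr : F_q → ZMod p. Then for every r ∈ F_q with r ≠ 1 and r ≠ −1, (2/q) · Σ_{s ∈ F_q} |cos²(2π·(Tr s).val/p) − cos²(2π·(Tr(r·s)).val/p)| ≥ 1/2. -/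
open Real

/-!
Write `x(s) = cos² θ(s) - cos² θ(rs)` with `θ(s) = 2π·Tr(s)/p`. As `|x| ≤ 1` we have `|x| ≥ x²`, and
`8x² = 2 + cos 4θ(s) + cos 4θ(rs) - 2 cos (2θ(s) + 2θ(rs)) - 2 cos (2θ(s) - 2θ(rs))`.
Each cosine is the real part of the primitive character `ψ = e(Tr(·)/p)` at `c·s` for
`c ∈ {4, 4r, 2 + 2r, 2 - 2r}`. Summing over `s`, orthogonality kills every term with `c ≠ 0`;
since `p` is odd and `r ≠ ±1`, only `c = 4r` can vanish, and it then contributes `q ≥ 0`.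
Hence `Σ |x| ≥ Σ x² ≥ q/4`.
-/

lemma cos_sq_sub_cos_sq_sq (a b : ℝ) :
    (cos a ^ 2 - cos b ^ 2) ^ 2 =
      (2 + cos (4 * a) + cos (4 * b) - 2 * cos (2 * a + 2 * b) - 2 * cos (2 * a - 2 * b)) / 8 := by
  have cos_four_mul (x : ℝ) : cos (4 * x) = 2 * cos (2 * x) ^ 2 - 1 := by
    rw [show 4 * x = 2 * (2 * x) by ring, cos_two_mul]
  rw [cos_four_mul, cos_four_mul, cos_add, cos_sub, cos_sq a, cos_sq b]
  ring

lemma sq_cos_sq_sub_cos_sq_le_abs (a b : ℝ) :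
    (cos a ^ 2 - cos b ^ 2) ^ 2 ≤ |cos a ^ 2 - cos b ^ 2| := by
  have h : |cos a ^ 2 - cos b ^ 2| ≤ 1 := by
    rw [abs_le]
    constructor <;> nlinarith [sq_nonneg (cos a), sq_nonneg (cos b), cos_sq_le_one a, cos_sq_le_one b]
  rw [← sq_abs]
  nlinarith [abs_nonneg (cos a ^ 2 - cos b ^ 2)]

namespace AddChar

lemma cos_add_eq_re_of_exp_eq {A : Type*} [AddGroup A] {ψ : AddChar A ℂ} {θ : A → ℝ}
    (hθ : ∀ s, Complex.exp (θ s * Complex.I) = ψ s) (m n : ℤ) (s t : A) :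
    cos (m * θ s + n * θ t) = (ψ (m • s + n • t)).re := by
  rw [map_add_eq_mul, map_zsmul_eq_zpow, map_zsmul_eq_zpow, ← hθ, ← hθ, ← Complex.exp_int_mul,
    ← Complex.exp_int_mul, ← Complex.exp_add, ← Complex.exp_ofReal_mul_I_re]
  push_cast
  ring_nf

lemma sum_re_mul_eq_ite {F : Type*} [Field F] [Fintype F] [DecidableEq F] {ψ : AddChar F ℂ}
    (hψ : ψ.IsPrimitive) (c : F) :
    ∑ s, (ψ (c * s)).re = if c = 0 then (Fintype.card F : ℝ) else 0 := by
  simp_rw [mul_comm c]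
  rw [← Complex.re_sum, sum_mulShift c hψ]
  split_ifs <;> simp

end AddChar

section CharacterSum

variable {F : Type*} [Field F] [Fintype F] {ψ : AddChar F ℂ} {θ : F → ℝ} {r : F}

lemma card_div_four_le_sum_sq_cos_sq_sub_cos_sq (h2 : (2 : F) ≠ 0) (hψ : ψ.IsPrimitive)
    (hθ : ∀ s, Complex.exp (θ s * Complex.I) = ψ s) (hr1 : r ≠ 1) (hr2 : r ≠ -1) :
    (Fintype.card F : ℝ) / 4 ≤ ∑ s, (cos (θ s) ^ 2 - cos (θ (r * s)) ^ 2) ^ 2 := by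
  classical
  have hcos (m n : ℤ) (s : F) : cos (m * θ s + n * θ (r * s)) = (ψ ((m + n * r) * s)).re := by
    rw [AddChar.cos_add_eq_re_of_exp_eq hθ, zsmul_eq_mul, zsmul_eq_mul]
    ring_nf
  have expand (s : F) : (cos (θ s) ^ 2 - cos (θ (r * s)) ^ 2) ^ 2 =
      (2 + (ψ (4 * s)).re + (ψ ((4 * r) * s)).re - 2 * (ψ ((2 + 2 * r) * s)).re
        - 2 * (ψ ((2 - 2 * r) * s)).re) / 8 := by
    have h40 := hcos 4 0 s
    have h04 := hcos 0 4 s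
    have h22 := hcos 2 2 s
    have h2m2 := hcos 2 (-2) s
    push_cast at h40 h04 h22 h2m2
    simp only [zero_mul, add_zero, zero_add, neg_mul, ← sub_eq_add_neg] at h40 h04 h22 h2m2
    rw [cos_sq_sub_cos_sq_sq, h40, h04, h22, h2m2, mul_comm (4 : F)]
  have h4 : (4 : F) ≠ 0 := by
    rw [show (4 : F) = 2 * 2 by norm_num]
    exact mul_ne_zero h2 h2
  have hplus : (2 + 2 * r : F) ≠ 0 := by
    rw [show (2 + 2 * r : F) = 2 * (r - -1) by ring]
    exact mul_ne_zero h2 (sub_ne_zero.2 hr2)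
  have hminus : (2 - 2 * r : F) ≠ 0 := by
    rw [show (2 - 2 * r : F) = -2 * (r - 1) by ring]
    exact mul_ne_zero (neg_ne_zero.2 h2) (sub_ne_zero.2 hr1)
  simp_rw [expand, ← Finset.sum_div, Finset.sum_sub_distrib, Finset.sum_add_distrib,
    ← Finset.mul_sum, AddChar.sum_re_mul_eq_ite hψ, if_neg h4, if_neg hplus, if_neg hminus]
  simp only [Finset.sum_const, Finset.card_univ, nsmul_eq_mul]
  split_ifs <;> linarith [(Fintype.card F).cast_nonneg (α := ℝ)]

lemma card_div_four_le_sum_abs_cos_sq_sub_cos_sq (h2 : (2 : F) ≠ 0) (hψ : ψ.IsPrimitive)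
    (hθ : ∀ s, Complex.exp (θ s * Complex.I) = ψ s) (hr1 : r ≠ 1) (hr2 : r ≠ -1) :
    (Fintype.card F : ℝ) / 4 ≤ ∑ s, |cos (θ s) ^ 2 - cos (θ (r * s)) ^ 2| :=
  (card_div_four_le_sum_sq_cos_sq_sub_cos_sq h2 hψ hθ hr1 hr2).trans
    (Finset.sum_le_sum fun _ _ => sq_cos_sq_sub_cos_sq_le_abs _ _)

end CharacterSum

lemma isPrimitive_stdAddChar_comp_trace (p : ℕ) [Fact p.Prime] (F : Type*) [Field F] [Finite F]
    [Algebra (ZMod p) F] :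
    (ZMod.stdAddChar.compAddMonoidHom (Algebra.trace (ZMod p) F).toAddMonoidHom).IsPrimitive := by
  refine AddChar.IsPrimitive.of_ne_one fun h => ?_
  obtain ⟨a, ha⟩ := DFunLike.ne_iff.1 (Algebra.trace_ne_zero (ZMod p) F)
  apply ha
  rw [LinearMap.zero_apply, ← ZMod.injective_stdAddChar.eq_iff, AddChar.map_zero_eq_one]
  exact DFunLike.congr_fun h a

/-- For `p` an odd prime, `F_q` of characteristic `p`, and `r ∈ F_q` with
`r ≠ ±1`, `(2/q) Σ_s |cos²(2π Tr(s)/p) − cos²(2π Tr(rs)/p)| ≥ 1/2`. -/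
theorem stmt_16 (p : ℕ) [Fact p.Prime] (hp : p ≠ 2) (F : Type*) [Field F] [Fintype F]
    [CharP F p] [Algebra (ZMod p) F] (r : F) (hr1 : r ≠ 1) (hr2 : r ≠ -1) :
    (1 : ℝ) / 2 ≤ (2 / (Fintype.card F : ℝ)) * ∑ s : F,
      |(Real.cos (2 * Real.pi * ((Algebra.trace (ZMod p) F s).val : ℝ) / p)) ^ 2
        - (Real.cos (2 * Real.pi * ((Algebra.trace (ZMod p) F (r * s)).val : ℝ) / p)) ^ 2| := by
  have h2 : (2 : F) ≠ 0 := Ring.two_ne_zero (by rwa [ringChar.eq F p])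
  have hθ (s : F) :
      Complex.exp ((2 * π * ((Algebra.trace (ZMod p) F s).val : ℝ) / p : ℝ) * Complex.I) =
        ZMod.stdAddChar (Algebra.trace (ZMod p) F s) := by
    rw [ZMod.stdAddChar_apply, ZMod.toCircle_apply]
    push_cast
    ring_nf
  have hsum := card_div_four_le_sum_abs_cos_sq_sub_cos_sq h2
    (isPrimitive_stdAddChar_comp_trace p F) hθ hr1 hr2
  have hq : (0 : ℝ) < Fintype.card F := Nat.cast_pos.2 Fintype.card_pos
  calc (1 : ℝ) / 2 = 2 / (Fintype.card F : ℝ) * ((Fintype.card F : ℝ) / 4) := by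
        field_simp
        norm_num
    _ ≤ _ := by gcongr
end
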